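/- For a positive semidefinite matrix W and vector h with hᴴWh > 0, the rank-one replacement W' = (W h hᴴ W)/(hᴴ W h) satisfies trace(W') ≤ trace(W), so the replacement does not increase transmit power. -/

import Mathlib

/-!
The trace of `W'` is `‖W h‖² / (hᴴ W h)`. Cauchy–Schwarz for the semi-inner product
`⟪x, y⟫ = xᴴ W y`, applied to `x = eᵢ` and `y = h`, gives `|(W h)ᵢ|² ≤ Wᵢᵢ · hᴴ W h`;
summing over `i` yields `‖W h‖² ≤ tr W · hᴴ W h`.
-/

open scoped ComplexOrder
open RCLike

namespace Matrix.PosSemidef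

variable {n 𝕜 : Type*} [Fintype n] [RCLike 𝕜] {M : Matrix n n 𝕜}

theorem norm_star_dotProduct_mulVec_sq_le (hM : M.PosSemidef) (x y : n → 𝕜) :
    ‖star x ⬝ᵥ M *ᵥ y‖ ^ 2 ≤ re (star x ⬝ᵥ M *ᵥ x) * re (star y ⬝ᵥ M *ᵥ y) := by
  let := M.toSeminormedAddCommGroup hM
  let := M.toInnerProductSpace hM
  have hinner (u v : n → 𝕜) : inner 𝕜 u v = star u ⬝ᵥ M *ᵥ v := dotProduct_comm _ _
  have hcs := inner_mul_inner_self_le (𝕜 := 𝕜) x y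
  rwa [← inner_conj_symm y x, norm_conj, ← sq, hinner, hinner, hinner] at hcs

theorem norm_mulVec_apply_sq_le [DecidableEq n] (hM : M.PosSemidef) (h : n → 𝕜) (i : n) :
    ‖(M *ᵥ h) i‖ ^ 2 ≤ re (M i i) * re (star h ⬝ᵥ M *ᵥ h) := by
  have hstar : star (Pi.single i 1 : n → 𝕜) = Pi.single i 1 := by simp
  simpa [hstar, single_dotProduct, mulVec_single] using
    hM.norm_star_dotProduct_mulVec_sq_le (Pi.single i 1) h

theorem re_dotProduct_star_mulVec_le (hM : M.PosSemidef) (h : n → 𝕜) :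
    re (M *ᵥ h ⬝ᵥ star (M *ᵥ h)) ≤ re (trace M) * re (star h ⬝ᵥ M *ᵥ h) := by
  classical
  have hsum : re (M *ᵥ h ⬝ᵥ star (M *ᵥ h)) = ∑ i, ‖(M *ᵥ h) i‖ ^ 2 := by
    simp only [dotProduct, Pi.star_apply, star_def, mul_conj, map_sum, ← ofReal_pow, ofReal_re]
  rw [hsum, trace, map_sum, Finset.sum_mul]
  exact Finset.sum_le_sum fun i _ => hM.norm_mulVec_apply_sq_le h i

theorem re_trace_smul_vecMulVec_le (hM : M.PosSemidef) (h : n → 𝕜) :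
    re (trace ((star h ⬝ᵥ M *ᵥ h)⁻¹ • vecMulVec (M *ᵥ h) (star (M *ᵥ h)))) ≤ re (trace M) := by
  obtain ⟨d, hd, hd_eq⟩ := nonneg_iff_exists_ofReal.mp (hM.dotProduct_mulVec_nonneg h)
  have key := hM.re_dotProduct_star_mulVec_le h
  rw [← hd_eq, ofReal_re] at key
  rw [trace_smul, trace_vecMulVec, ← hd_eq, smul_eq_mul, ← ofReal_inv, re_ofReal_mul, inv_mul_eq_div]
  -- also covers `d = 0`, where the junk value `0⁻¹ = 0` makes the left side vanish
  exact div_le_of_le_mul₀ hd (nonneg_iff.mp hM.trace_nonneg).1 key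

end Matrix.PosSemidef

open Matrix in
theorem stmt_3_general {L : ℕ} (W : Matrix (Fin L) (Fin L) ℂ) (hW : W.PosSemidef)
    (h : Fin L → ℂ)
    (W' : Matrix (Fin L) (Fin L) ℂ)
    (hW' : W' = (star h ⬝ᵥ W.mulVec h)⁻¹ •
      Matrix.vecMulVec (W.mulVec h) (star (W.mulVec h))) :
    W'.trace.re ≤ W.trace.re := by
  subst hW'
  exact hW.re_trace_smul_vecMulVec_le h

open Matrix in
/-- The rank-one replacement does not increase the trace (transmit power):
`trace(W') ≤ trace(W)`. -/
theorem stmt_3 {L : ℕ} (W : Matrix (Fin L) (Fin L) ℂ) (hW : W.PosSemidef)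
    (h : Fin L → ℂ) (hpos : 0 < (star h ⬝ᵥ W.mulVec h).re)
    (W' : Matrix (Fin L) (Fin L) ℂ)
    (hW' : W' = (star h ⬝ᵥ W.mulVec h)⁻¹ •
      Matrix.vecMulVec (W.mulVec h) (star (W.mulVec h))) :
    W'.trace.re ≤ W.trace.re :=
  stmt_3_general W hW h W' hW'
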